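/- (Proposition 1, worst-case bounds for non-negative outcomes.) Suppose Y(1) ≥ 0 and Y(0) ≥ 0 almost surely, and there are constants 0 < ε_{1,L} ≤ ε_{1,U} and 0 < ε_{0,L} ≤ ε_{0,U} with ε_{1,L} ≤ ε1(X) ≤ ε_{1,U} and ε_{0,L} ≤ ε0(X) ≤ ε_{0,U} almost surely. Then τ_L ≤ τ ≤ τ_U, where τ_L = E[Z·μ1(X) + (1−Z)·μ1(X)/ε_{1,U}] − E[Z·μ0(X)·ε_{0,U} + (1−Z)·μ0(X)], and τ_U = E[Z·μ1(X) + (1−Z)·μ1(X)/ε_{1,L}] − E[Z·μ0(X)·ε_{0,L} + (1−Z)·μ0(X)]. -/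

import Mathlib

/-!
By the tower property, `E[Y(1)] = E[E[Z Y(1) | X] + E[(1 - Z) Y(1) | X]]`. The first summand is
the identified `e μ₁`; the sensitivity model turns the second into `(1 - e) μ₁ / ε₁`, which lies
between `(1 - e) μ₁ / ε_{1,U}` and `(1 - e) μ₁ / ε_{1,L}` because `μ₁ ≥ 0` (non-negative outcomes).
The control arm is the same argument with `Z` and `1 - Z` exchanged: the unidentified summand is
`E[Z Y(0) | X] = ε₀ e μ₀`. Finally each bound integrand has the form `μ(X) (c + (1 - c) Z)`, and
pulling out `μ(X)` replaces `Z` by its conditional expectation `e(X)`.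
-/

open MeasureTheory Filter

theorem Real.norm_le_one_of_mem_Icc {x : ℝ} (hx : x ∈ Set.Icc (0 : ℝ) 1) : ‖x‖ ≤ 1 := by
  rw [Real.norm_of_nonneg hx.1]
  exact hx.2

namespace MeasureTheory

variable {Ω : Type*} {m mΩ : MeasurableSpace Ω} {μ : Measure Ω}

theorem condExp_const_add_const_mul [IsFiniteMeasure μ] (hm : m ≤ mΩ) {f : Ω → ℝ}
    (hf : Integrable f μ) (a b : ℝ) :
    μ[fun ω => a + b * f ω|m] =ᵐ[μ] fun ω => a + b * μ[f|m] ω := by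
  change μ[(fun _ => a) + b • f|m] =ᵐ[μ] _
  filter_upwards [condExp_add (m := m) (integrable_const a) (hf.smul b),
    condExp_smul (μ := μ) b f m] with ω hadd hsmul
  rw [hadd, Pi.add_apply, hsmul, condExp_const hm]
  rfl

theorem mul_ae_eq_condExp_mul {f g q : Ω → ℝ} (hf : StronglyMeasurable[m] f)
    (hfg : Integrable (fun ω => f ω * g ω) μ) (hg : Integrable g μ) (hq : q =ᵐ[μ] μ[g|m]) :
    (fun ω => f ω * q ω) =ᵐ[μ] μ[fun ω => f ω * g ω|m] := by
  filter_upwards [hq, condExp_mul_of_stronglyMeasurable_left hf hfg hg] with ω hqω hω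
  rw [show (fun ω => f ω * g ω) = f * g from rfl, hω, hqω]
  rfl

theorem integral_condExp_add_condExp (hm : m ≤ mΩ) [SigmaFinite (μ.trim hm)] {f g : Ω → ℝ}
    (hf : Integrable f μ) (hg : Integrable g μ) :
    ∫ ω, (μ[f|m] ω + μ[g|m] ω) ∂μ = ∫ ω, (f ω + g ω) ∂μ := by
  rw [integral_add integrable_condExp integrable_condExp, integral_condExp hm,
    integral_condExp hm, integral_add hf hg]

theorem ae_nonneg_of_mul_ae_eq_condExp {T W p mu : Ω → ℝ} (hT : ∀ ω, 0 ≤ T ω)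
    (hW : 0 ≤ᵐ[μ] W) (hp : ∀ᵐ ω ∂μ, 0 < p ω)
    (hmup : (fun ω => mu ω * p ω) =ᵐ[μ] μ[fun ω => T ω * W ω|m]) :
    ∀ᵐ ω ∂μ, 0 ≤ mu ω := by
  have hTW : 0 ≤ᵐ[μ] μ[fun ω => T ω * W ω|m] :=
    condExp_nonneg (hW.mono fun ω hω => mul_nonneg (hT ω) hω)
  filter_upwards [hTW, hmup, hp] with ω hTWω hmupω hpω
  exact nonneg_of_mul_nonneg_left (hmupω ▸ hTWω) hpω

theorem condExp_one_sub [IsFiniteMeasure μ] (hm : m ≤ mΩ) {f : Ω → ℝ} (hf : Integrable f μ) :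
    μ[fun ω => 1 - f ω|m] =ᵐ[μ] fun ω => 1 - μ[f|m] ω := by
  simpa [← sub_eq_add_neg] using condExp_const_add_const_mul hm hf 1 (-1)

end MeasureTheory

namespace CausalSensitivity

variable {Ω : Type*} {m mΩ : MeasurableSpace Ω} {μ : Measure Ω}

-- `W` is observed on the arm `T` (propensity `p`, identified mean `mu`); `ρ` expresses the
-- unidentified arm through `mu`, and `[a, b]` is the sensitivity range.
theorem integral_bounds_of_condExp_ae_eq [IsFiniteMeasure μ] (hm : m ≤ mΩ)
    {T W p mu ρ : Ω → ℝ} (hTm : AEStronglyMeasurable T μ) (hT : ∀ ω, T ω ∈ Set.Icc (0 : ℝ) 1)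
    (hW : Integrable W μ) (hWnn : 0 ≤ᵐ[μ] W) (hp : p =ᵐ[μ] μ[T|m])
    (hp01 : ∀ᵐ ω ∂μ, 0 < p ω ∧ p ω ≤ 1) (hmu : StronglyMeasurable[m] mu)
    (hmup : (fun ω => mu ω * p ω) =ᵐ[μ] μ[fun ω => T ω * W ω|m])
    (hρ : μ[fun ω => (1 - T ω) * W ω|m] =ᵐ[μ] fun ω => ρ ω * (1 - p ω) * mu ω)
    {a b : ℝ} (hab : ∀ᵐ ω ∂μ, a ≤ ρ ω ∧ ρ ω ≤ b)
    (ha : Integrable (fun ω => T ω * mu ω + (1 - T ω) * mu ω * a) μ)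
    (hb : Integrable (fun ω => T ω * mu ω + (1 - T ω) * mu ω * b) μ) :
    ∫ ω, (T ω * mu ω + (1 - T ω) * mu ω * a) ∂μ ≤ ∫ ω, W ω ∂μ ∧
      ∫ ω, W ω ∂μ ≤ ∫ ω, (T ω * mu ω + (1 - T ω) * mu ω * b) ∂μ := by
  have hT1 (ω : Ω) : ‖T ω‖ ≤ 1 := Real.norm_le_one_of_mem_Icc (hT ω)
  have h1T1 (ω : Ω) : ‖1 - T ω‖ ≤ 1 :=
    Real.norm_le_one_of_mem_Icc (Set.Icc.mem_iff_one_sub_mem.1 (hT ω))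
  have hTint : Integrable T μ := .of_bound hTm 1 (ae_of_all _ hT1)
  have hbound (c : ℝ) (hc : Integrable (fun ω => T ω * mu ω + (1 - T ω) * mu ω * c) μ) :
      (fun ω => mu ω * (c + (1 - c) * p ω)) =ᵐ[μ]
        μ[fun ω => T ω * mu ω + (1 - T ω) * mu ω * c|m] := by
    have hg : (fun ω => T ω * mu ω + (1 - T ω) * mu ω * c)
        = fun ω => mu ω * (c + (1 - c) * T ω) := funext fun ω => by ring
    rw [hg] at hc ⊢
    refine mul_ae_eq_condExp_mul hmu hc ((integrable_const c).add (hTint.const_mul _)) ?_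
    filter_upwards [hp, condExp_const_add_const_mul hm hTint c (1 - c)] with ω hpω hω
    rw [hω, hpω]
  have hWsplit : ∫ ω, W ω ∂μ = ∫ ω, (μ[fun ω => T ω * W ω|m] ω
      + μ[fun ω => (1 - T ω) * W ω|m] ω) ∂μ := by
    rw [integral_condExp_add_condExp hm (g := fun ω => (1 - T ω) * W ω)
      (hW.bdd_mul hTm (ae_of_all _ hT1))
      (hW.bdd_mul (aestronglyMeasurable_const.sub hTm) (ae_of_all _ h1T1))]
    congr 1 with ω
    ring
  have hmunn := ae_nonneg_of_mul_ae_eq_condExp (fun ω => (hT ω).1)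
    hWnn (hp01.mono fun ω h => h.1) hmup
  constructor
  · rw [← integral_condExp hm (f := fun ω => T ω * mu ω + (1 - T ω) * mu ω * a), hWsplit,
       ← integral_congr_ae (hbound a ha)]
    refine integral_mono_ae (integrable_condExp.congr (hbound a ha).symm)
      (integrable_condExp.add integrable_condExp) ?_
    filter_upwards [hmup, hρ, hab, hmunn, hp01] with ω hmupω hρω habω hmuω hpω
    rw [← hmupω, hρω]
    nlinarith [mul_nonneg (mul_nonneg (sub_nonneg.2 habω.1) (sub_nonneg.2 hpω.2)) hmuω]
  · rw [← integral_condExp hm (f := fun ω => T ω * mu ω + (1 - T ω) * mu ω * b), hWsplit,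
      ← integral_congr_ae (hbound b hb)]
    refine integral_mono_ae (integrable_condExp.add integrable_condExp)
      (integrable_condExp.congr (hbound b hb).symm) ?_
    filter_upwards [hmup, hρ, hab, hmunn, hp01] with ω hmupω hρω habω hmuω hpω
    rw [← hmupω, hρω]
    nlinarith [mul_nonneg (mul_nonneg (sub_nonneg.2 habω.2) (sub_nonneg.2 hpω.2)) hmuω]


theorem treated_arm_integral_bounds [IsFiniteMeasure μ] (hm : m ≤ mΩ)
    {T W e mu eps : Ω → ℝ} (hTm : AEStronglyMeasurable T μ) (hT : ∀ ω, T ω ∈ Set.Icc (0 : ℝ) 1)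
    (hW : Integrable W μ) (hWnn : 0 ≤ᵐ[μ] W) (he : e =ᵐ[μ] μ[T|m])
    (he01 : ∀ᵐ ω ∂μ, 0 < e ω ∧ e ω ≤ 1) (hmu : StronglyMeasurable[m] mu)
    (hmue : (fun ω => mu ω * e ω) =ᵐ[μ] μ[fun ω => T ω * W ω|m])
    (hsens : ∀ᵐ ω ∂μ, (1 - e ω) * μ[fun ω => T ω * W ω|m] ω
      = eps ω * e ω * μ[fun ω => (1 - T ω) * W ω|m] ω)
    {L U : ℝ} (hL : 0 < L) (hLU : ∀ᵐ ω ∂μ, L ≤ eps ω ∧ eps ω ≤ U)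
    (hintU : Integrable (fun ω => T ω * mu ω + (1 - T ω) * mu ω / U) μ)
    (hintL : Integrable (fun ω => T ω * mu ω + (1 - T ω) * mu ω / L) μ) :
    ∫ ω, (T ω * mu ω + (1 - T ω) * mu ω / U) ∂μ ≤ ∫ ω, W ω ∂μ ∧
      ∫ ω, W ω ∂μ ≤ ∫ ω, (T ω * mu ω + (1 - T ω) * mu ω / L) ∂μ := by
  have hρ : μ[fun ω => (1 - T ω) * W ω|m] =ᵐ[μ] fun ω => (eps ω)⁻¹ * (1 - e ω) * mu ω := by
    filter_upwards [hsens, hmue, he01, hLU] with ω hs hmuω heω hLUω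
    rw [← hmuω] at hs
    have := hL.trans_le hLUω.1
    field_simp
    nlinarith
  simp only [div_eq_mul_inv] at hintU hintL ⊢
  exact integral_bounds_of_condExp_ae_eq hm hTm hT hW hWnn he he01 hmu hmue hρ
    (hLU.mono fun ω h => ⟨inv_anti₀ (hL.trans_le h.1) h.2, inv_anti₀ hL h.1⟩) hintU hintL

theorem control_arm_integral_bounds [IsFiniteMeasure μ] (hm : m ≤ mΩ)
    {T W e mu eps : Ω → ℝ} (hTm : AEStronglyMeasurable T μ) (hT : ∀ ω, T ω ∈ Set.Icc (0 : ℝ) 1)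
    (hW : Integrable W μ) (hWnn : 0 ≤ᵐ[μ] W) (he : e =ᵐ[μ] μ[T|m])
    (he01 : ∀ᵐ ω ∂μ, 0 ≤ e ω ∧ e ω < 1) (hmu : StronglyMeasurable[m] mu)
    (hmue : (fun ω => mu ω * (1 - e ω)) =ᵐ[μ] μ[fun ω => (1 - T ω) * W ω|m])
    (hsens : ∀ᵐ ω ∂μ, (1 - e ω) * μ[fun ω => T ω * W ω|m] ω
      = eps ω * e ω * μ[fun ω => (1 - T ω) * W ω|m] ω)
    {L U : ℝ} (hLU : ∀ᵐ ω ∂μ, L ≤ eps ω ∧ eps ω ≤ U)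
    (hintL : Integrable (fun ω => T ω * mu ω * L + (1 - T ω) * mu ω) μ)
    (hintU : Integrable (fun ω => T ω * mu ω * U + (1 - T ω) * mu ω) μ) :
    ∫ ω, (T ω * mu ω * L + (1 - T ω) * mu ω) ∂μ ≤ ∫ ω, W ω ∂μ ∧
      ∫ ω, W ω ∂μ ≤ ∫ ω, (T ω * mu ω * U + (1 - T ω) * mu ω) ∂μ := by
  have hTint : Integrable T μ :=
    .of_bound hTm 1 (ae_of_all _ fun ω => Real.norm_le_one_of_mem_Icc (hT ω))
  have hp : (fun ω => 1 - e ω) =ᵐ[μ] μ[fun ω => 1 - T ω|m] := by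
    filter_upwards [he, condExp_one_sub hm hTint] with ω heω hω
    rw [hω, heω]
  have hρ : μ[fun ω => (1 - (1 - T ω)) * W ω|m] =ᵐ[μ]
      fun ω => eps ω * (1 - (1 - e ω)) * mu ω := by
    simp only [sub_sub_cancel]
    filter_upwards [hsens, hmue, he01] with ω hs hmuω heω
    rw [← hmuω] at hs
    exact mul_left_cancel₀ (sub_pos.2 heω.2).ne' (by linear_combination hs)
  have hswap (c : ℝ) : (fun ω => (1 - T ω) * mu ω + (1 - (1 - T ω)) * mu ω * c)
      = fun ω => T ω * mu ω * c + (1 - T ω) * mu ω := funext fun ω => by ring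
  simpa only [hswap] using integral_bounds_of_condExp_ae_eq hm (T := fun ω => 1 - T ω)
    (aestronglyMeasurable_const.sub hTm) (fun ω => Set.Icc.mem_iff_one_sub_mem.1 (hT ω)) hW hWnn
    hp (he01.mono fun ω h => ⟨sub_pos.2 h.2, by linarith [h.1]⟩) hmu hmue hρ hLU
    (hswap L ▸ hintL) (hswap U ▸ hintU)

end CausalSensitivity

open CausalSensitivity

theorem worst_case_bounds_nonneg_outcomes
    {Ω : Type*} [F : MeasurableSpace Ω] (P : Measure Ω) [IsProbabilityMeasure P]
    (Z Y1 Y0 Y : Ω → ℝ)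
    (hZmeas : Measurable Z) (hZ01 : ∀ ω, Z ω = 0 ∨ Z ω = 1)
    (hY1int : Integrable Y1 P) (hY0int : Integrable Y0 P)
    (hYdef : ∀ ω, Y ω = Z ω * Y1 ω + (1 - Z ω) * Y0 ω)
    (mX : MeasurableSpace Ω) (hmX : mX ≤ F)
    (eX : Ω → ℝ) (heX : eX =ᵐ[P] P[Z|mX])
    (hov : ∀ᵐ ω ∂P, 0 < eX ω ∧ eX ω < 1)
    (mu1 mu0 : Ω → ℝ) (hmu1meas : Measurable[mX] mu1) (hmu0meas : Measurable[mX] mu0)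
    (hmu1 : (fun ω => mu1 ω * eX ω) =ᵐ[P] P[fun ω => Z ω * Y ω|mX])
    (hmu0 : (fun ω => mu0 ω * (1 - eX ω)) =ᵐ[P] P[fun ω => (1 - Z ω) * Y ω|mX])
    (eps1 eps0 : Ω → ℝ)
    (hsens1 : ∀ᵐ ω ∂P, (1 - eX ω) * (P[fun ω' => Z ω' * Y1 ω'|mX]) ω
        = eps1 ω * eX ω * (P[fun ω' => (1 - Z ω') * Y1 ω'|mX]) ω)
    (hsens0 : ∀ᵐ ω ∂P, (1 - eX ω) * (P[fun ω' => Z ω' * Y0 ω'|mX]) ω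
        = eps0 ω * eX ω * (P[fun ω' => (1 - Z ω') * Y0 ω'|mX]) ω)
    (hY1nn : ∀ᵐ ω ∂P, 0 ≤ Y1 ω) (hY0nn : ∀ᵐ ω ∂P, 0 ≤ Y0 ω)
    (e1L e1U e0L e0U : ℝ)
    (he1L : 0 < e1L)
    (hb1 : ∀ᵐ ω ∂P, e1L ≤ eps1 ω ∧ eps1 ω ≤ e1U)
    (hb0 : ∀ᵐ ω ∂P, e0L ≤ eps0 ω ∧ eps0 ω ≤ e0U)
    (hintU1 : Integrable (fun ω => Z ω * mu1 ω + (1 - Z ω) * mu1 ω / e1U) P)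
    (hintU0 : Integrable (fun ω => Z ω * mu0 ω * e0U + (1 - Z ω) * mu0 ω) P)
    (hintL1 : Integrable (fun ω => Z ω * mu1 ω + (1 - Z ω) * mu1 ω / e1L) P)
    (hintL0 : Integrable (fun ω => Z ω * mu0 ω * e0L + (1 - Z ω) * mu0 ω) P) :
    (∫ ω, (Z ω * mu1 ω + (1 - Z ω) * mu1 ω / e1U) ∂P
        - ∫ ω, (Z ω * mu0 ω * e0U + (1 - Z ω) * mu0 ω) ∂P
      ≤ ∫ ω, Y1 ω ∂P - ∫ ω, Y0 ω ∂P)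
    ∧ (∫ ω, Y1 ω ∂P - ∫ ω, Y0 ω ∂P
      ≤ ∫ ω, (Z ω * mu1 ω + (1 - Z ω) * mu1 ω / e1L) ∂P
        - ∫ ω, (Z ω * mu0 ω * e0L + (1 - Z ω) * mu0 ω) ∂P) := by
  have hZ (ω : Ω) : Z ω ∈ Set.Icc (0 : ℝ) 1 := by rcases hZ01 ω with h | h <;> simp [h]
  have hZY : (fun ω => Z ω * Y ω) = fun ω => Z ω * Y1 ω :=
    funext fun ω => by rcases hZ01 ω with h | h <;> simp [hYdef, h]
  have h1ZY : (fun ω => (1 - Z ω) * Y ω) = fun ω => (1 - Z ω) * Y0 ω :=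
    funext fun ω => by rcases hZ01 ω with h | h <;> simp [hYdef, h]
  rw [hZY] at hmu1
  rw [h1ZY] at hmu0
  obtain ⟨hY1L, hY1U⟩ := treated_arm_integral_bounds hmX hZmeas.aestronglyMeasurable hZ hY1int
    hY1nn heX (hov.mono fun ω h => ⟨h.1, h.2.le⟩) hmu1meas.stronglyMeasurable hmu1 hsens1 he1L
    hb1 hintU1 hintL1
  obtain ⟨hY0L, hY0U⟩ := control_arm_integral_bounds hmX hZmeas.aestronglyMeasurable hZ hY0int
    hY0nn heX (hov.mono fun ω h => ⟨h.1.le, h.2⟩) hmu0meas.stronglyMeasurable hmu0 hsens0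
    hb0 hintL0 hintU0
  constructor <;> linarith
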